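/- arXiv:2506.13309 — 2 statements merged into one kernel-verified Lean document; each statement's English description precedes it below -/
import Mathlib

section
/- For the factor model Y_j = U + X_j (j = 1, ..., m) with U, X_1, ..., X_m mutually independent with exponential-family pmfs f(x;θ_j) = h(x) exp{x a(θ_j) - b(θ_j)}, the partial derivative of the likelihood L(θ_0, ..., θ_m) with respect to θ_1, evaluated at a critical point θ_0 = θ̂_0 of L in θ_0, equals (ȳ_1 - E(Y_1)) · a'(θ_1) · n · L, where ȳ_1 is the sample mean of variable 1 and E(Y_1) = E(U) + E(X_1). -/
/-- For the factor model `Y_j = U + X_j` with exponential-family pmfs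
`f(x;θ) = h(x) exp{x a(θ) - b(θ)}`, the partial derivative of the likelihood
`L(θ_0, ..., θ_m)` with respect to `θ_1`, evaluated at a critical point `θ_0 = θ̂_0` of
`L` in `θ_0`, equals `(ȳ_1 - E(Y_1)) · a'(θ_1) · n · L`, where `ȳ_1` is the sample mean
of variable 1 and `E(Y_1) = E(U) + E(X_1) = b'(θ_0)/a'(θ_0) + b'(θ_1)/a'(θ_1)`. -/
theorem factor_model_likelihood_partial_derivative
    (m n : ℕ) (hm : 0 < m) (hn : 0 < n)
    (y : Fin n → Fin m → ℕ)
    (h : ℕ → ℝ) (hh : ∀ x, 0 ≤ h x)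
    (a b a' b' : ℝ → ℝ)
    (ha : ∀ t, HasDerivAt a (a' t) t) (hb : ∀ t, HasDerivAt b (b' t) t)
    (ha' : ∀ t, a' t ≠ 0)
    (f : ℕ → ℝ → ℝ) (hf : ∀ x t, f x t = h x * Real.exp ((x : ℝ) * a t - b t))
    (L : (Fin (m + 1) → ℝ) → ℝ)
    (hL : ∀ τ : Fin (m + 1) → ℝ, L τ =
      ∏ i : Fin n, ∑ u ∈ Finset.range (Finset.univ.inf' ⟨⟨0, hm⟩, Finset.mem_univ _⟩ (y i) + 1),
        f u (τ 0) * ∏ j : Fin m, f (y i j - u) (τ j.succ))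
    (θ : Fin (m + 1) → ℝ)
    (hcrit0 : HasDerivAt (fun t : ℝ => L (Function.update θ 0 t)) 0 (θ 0)) :
    HasDerivAt (fun t : ℝ => L (Function.update θ (Fin.succ ⟨0, hm⟩) t))
      (((∑ i : Fin n, (y i ⟨0, hm⟩ : ℝ)) / n -
          (b' (θ 0) / a' (θ 0) + b' (θ (Fin.succ ⟨0, hm⟩)) / a' (θ (Fin.succ ⟨0, hm⟩)))) *
        a' (θ (Fin.succ ⟨0, hm⟩)) * n * L θ)
      (θ (Fin.succ ⟨0, hm⟩)) := by
  classical
  set i0 : Fin m := ⟨0, hm⟩ with hi0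
  set θ0 : ℝ := θ 0 with hθ0
  set θ1 : ℝ := θ (Fin.succ i0) with hθ1
  set a0 : ℝ := a' θ0 with ha0
  set a1 : ℝ := a' θ1 with ha1
  set b0 : ℝ := b' θ0 with hb0
  set b1 : ℝ := b' θ1 with hb1
  have hmn : (n : ℝ) ≠ 0 := Nat.cast_ne_zero.mpr hn.ne'
  have ha0' : a0 ≠ 0 := ha' θ0
  have ha1' : a1 ≠ 0 := ha' θ1
  -- derivative of f x
  have hfd : ∀ (x : ℕ) (t : ℝ),
      HasDerivAt (fun s => f x s) (f x t * ((x : ℝ) * a' t - b' t)) t := by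
    intro x t
    have h1 : HasDerivAt (fun s => (x : ℝ) * a s - b s) ((x : ℝ) * a' t - b' t) t :=
      ((ha t).const_mul _).sub (hb t)
    have h2 := h1.exp.const_mul (h x)
    have hfun : (fun s => f x s) = fun s => h x * Real.exp ((x : ℝ) * a s - b s) :=
      funext fun s => hf x s
    rw [hfun, hf x t]
    rw [mul_assoc]
    exact h2
  -- abbreviations
  let M : Fin n → ℕ := fun i => Finset.univ.inf' ⟨i0, Finset.mem_univ _⟩ (y i) + 1
  let P : Fin n → ℕ → ℝ := fun i u => ∏ j : Fin m, f (y i j - u) (θ j.succ)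
  let Q : Fin n → ℕ → ℝ := fun i u => ∏ j ∈ Finset.univ.erase i0, f (y i j - u) (θ j.succ)
  let S : Fin n → ℝ := fun i => ∑ u ∈ Finset.range (M i), f u θ0 * P i u
  let D0 : Fin n → ℝ := fun i =>
    ∑ u ∈ Finset.range (M i), f u θ0 * ((u : ℝ) * a0 - b0) * P i u
  let D1 : Fin n → ℝ := fun i =>
    ∑ u ∈ Finset.range (M i),
      f u θ0 * (f (y i i0 - u) θ1 * (((y i i0 - u : ℕ) : ℝ) * a1 - b1) * Q i u)
  have hPQ : ∀ i u, P i u = f (y i i0 - u) θ1 * Q i u := fun i u =>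
    (Finset.mul_prod_erase Finset.univ _ (Finset.mem_univ i0)).symm
  have hLθ : L θ = ∏ i : Fin n, S i := hL θ
  -- direction 0
  have hEq0 : (fun t : ℝ => L (Function.update θ 0 t)) =
      fun t => ∏ i : Fin n, ∑ u ∈ Finset.range (M i), f u t * P i u := by
    funext t
    rw [hL]
    refine Finset.prod_congr rfl fun i _ => Finset.sum_congr rfl fun u _ => ?_
    rw [Function.update_self]
    exact congrArg (f u t * ·) (Finset.prod_congr rfl fun j _ => by
      rw [Function.update_of_ne (Fin.succ_ne_zero j)])
  have hg0 : HasDerivAt (fun t => ∏ i : Fin n, ∑ u ∈ Finset.range (M i), f u t * P i u)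
      (∑ i : Fin n, (∏ k ∈ Finset.univ.erase i, S k) * D0 i) θ0 := by
    have := HasDerivAt.fun_finsetProd (u := (Finset.univ : Finset (Fin n)))
      (f := fun i t => ∑ u ∈ Finset.range (M i), f u t * P i u)
      (f' := fun i => D0 i) (x := θ0) ?_
    · exact this.congr_deriv (Finset.sum_congr rfl fun i _ => smul_eq_mul _ _)
    · intro i _
      refine HasDerivAt.fun_sum fun u _ => ?_
      exact (hfd u θ0).mul_const (P i u)
  have hE0 : (∑ i : Fin n, (∏ k ∈ Finset.univ.erase i, S k) * D0 i) = 0 := by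
    rw [hEq0] at hcrit0
    exact hg0.unique hcrit0
  -- direction 1
  have hEq1 : (fun t : ℝ => L (Function.update θ (Fin.succ i0) t)) =
      fun t => ∏ i : Fin n, ∑ u ∈ Finset.range (M i),
        f u θ0 * (f (y i i0 - u) t * Q i u) := by
    funext t
    rw [hL]
    refine Finset.prod_congr rfl fun i _ => Finset.sum_congr rfl fun u _ => ?_
    rw [Function.update_of_ne (Fin.succ_ne_zero i0).symm]
    congr 1
    rw [← Finset.mul_prod_erase Finset.univ
        (fun j => f (y i j - u) (Function.update θ (Fin.succ i0) t j.succ))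
        (Finset.mem_univ i0)]
    rw [Function.update_self]
    exact congrArg (f (y i i0 - u) t * ·) (Finset.prod_congr rfl fun j hj => by
      rw [Function.update_of_ne
        (fun hc => (Finset.mem_erase.mp hj).1 (Fin.succ_injective _ hc))])
  have hT : ∀ i, (∑ u ∈ Finset.range (M i), f u θ0 * (f (y i i0 - u) θ1 * Q i u)) = S i := by
    intro i
    refine Finset.sum_congr rfl fun u _ => ?_
    rw [hPQ i u]
  have hg1 : HasDerivAt (fun t => ∏ i : Fin n, ∑ u ∈ Finset.range (M i),
        f u θ0 * (f (y i i0 - u) t * Q i u))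
      (∑ i : Fin n, (∏ k ∈ Finset.univ.erase i, S k) * D1 i) θ1 := by
    have := HasDerivAt.fun_finsetProd (u := (Finset.univ : Finset (Fin n)))
      (f := fun i t => ∑ u ∈ Finset.range (M i), f u θ0 * (f (y i i0 - u) t * Q i u))
      (f' := fun i => D1 i) (x := θ1) ?_
    · refine this.congr_deriv (Finset.sum_congr rfl fun i _ => ?_).symm
      rw [smul_eq_mul]
      congr 1
      refine Finset.prod_congr rfl fun k _ => (hT k).symm
    · intro i _
      refine HasDerivAt.fun_sum fun u _ => ?_
      exact ((hfd (y i i0 - u) θ1).mul_const (Q i u)).const_mul (f u θ0)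
  -- key algebraic identity
  have key : ∀ i, D1 i =
      ((y i i0 : ℝ) * a1 - b1 - a1 * b0 / a0) * S i - a1 / a0 * D0 i := by
    intro i
    show D1 i = _
    simp only [D1, S, D0, Finset.mul_sum, ← Finset.sum_sub_distrib]
    refine Finset.sum_congr rfl fun u hu => ?_
    have hle : u ≤ y i i0 :=
      le_trans (Nat.lt_succ_iff.mp (Finset.mem_range.mp hu))
        (Finset.inf'_le _ (Finset.mem_univ i0))
    have hcast : ((y i i0 - u : ℕ) : ℝ) = (y i i0 : ℝ) - u := Nat.cast_sub hle
    rw [hPQ i u, hcast]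
    field_simp
    ring
  -- combine
  have hval : (∑ i : Fin n, (∏ k ∈ Finset.univ.erase i, S k) * D1 i) =
      ((∑ i : Fin n, (y i i0 : ℝ)) / n - (b0 / a0 + b1 / a1)) * a1 * n * L θ := by
    have step1 : (∑ i : Fin n, (∏ k ∈ Finset.univ.erase i, S k) * D1 i) =
        (∑ i : Fin n, ((y i i0 : ℝ) * a1 - b1 - a1 * b0 / a0)) * L θ := by
      rw [Finset.sum_mul]
      rw [← sub_zero (∑ i : Fin n, ((y i i0 : ℝ) * a1 - b1 - a1 * b0 / a0) * L θ)]
      rw [← mul_zero (a1 / a0), ← hE0, Finset.mul_sum, ← Finset.sum_sub_distrib]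
      refine Finset.sum_congr rfl fun i _ => ?_
      rw [key i, hLθ, ← Finset.prod_erase_mul Finset.univ S (Finset.mem_univ i)]
      ring
    rw [step1]
    have hsum : (∑ i : Fin n, ((y i i0 : ℝ) * a1 - b1 - a1 * b0 / a0)) =
        (∑ i : Fin n, (y i i0 : ℝ)) * a1 - n * b1 - n * (a1 * b0 / a0) := by
      rw [Finset.sum_sub_distrib, Finset.sum_sub_distrib, ← Finset.sum_mul,
        Finset.sum_const, Finset.sum_const, Finset.card_univ, Fintype.card_fin,
        nsmul_eq_mul, nsmul_eq_mul]
    rw [hsum]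
    congr 1
    field_simp
    ring
  rw [hEq1]
  exact hval ▸ hg1
end

section
/- Proposition 1 (mean matching at the MLE): Let Y_j = U + X_j for j = 1, ..., m, with U, X_1, ..., X_m simultaneously independent, each having a pmf of the form f(x;θ) = h(x) exp{x a(θ) - b(θ)} with a(θ) not constant. Then at any interior maximum likelihood estimate (θ̂_0, θ̂_1, ..., θ̂_m) of the likelihood based on n observed m-tuples, E(Y_j) = ȳ_j for every j, where ȳ_j is the sample mean of the j-th coordinate. -/
/-- Proposition 1 (mean matching at the MLE): let `Y_j = U + X_j`, `j = 1, ..., m`, with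
`U, X_1, ..., X_m` simultaneously independent, each with exponential-family pmf
`f(x;θ) = h(x) exp{x a(θ) - b(θ)}` (`a'` nonvanishing). At any interior MLE
`(θ̂_0, ..., θ̂_m)`—a point where all partial derivatives of the likelihood `L` vanish
and `L > 0`—we have `E(Y_j) = b'(θ̂_0)/a'(θ̂_0) + b'(θ̂_j)/a'(θ̂_j) = ȳ_j`
for every `j`, where `ȳ_j` is the sample mean of coordinate `j`. -/
theorem factor_model_mle_mean_matching
    (m n : ℕ) (hm : 0 < m) (hn : 0 < n)
    (y : Fin n → Fin m → ℕ)
    (h : ℕ → ℝ) (hh : ∀ x, 0 ≤ h x)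
    (a b a' b' : ℝ → ℝ)
    (ha : ∀ t, HasDerivAt a (a' t) t) (hb : ∀ t, HasDerivAt b (b' t) t)
    (ha' : ∀ t, a' t ≠ 0)
    (f : ℕ → ℝ → ℝ) (hf : ∀ x t, f x t = h x * Real.exp ((x : ℝ) * a t - b t))
    (L : (Fin (m + 1) → ℝ) → ℝ)
    (hL : ∀ τ : Fin (m + 1) → ℝ, L τ =
      ∏ i : Fin n, ∑ u ∈ Finset.range (Finset.univ.inf' ⟨⟨0, hm⟩, Finset.mem_univ _⟩ (y i) + 1),
        f u (τ 0) * ∏ j : Fin m, f (y i j - u) (τ j.succ))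
    (θ : Fin (m + 1) → ℝ) (hLpos : 0 < L θ)
    (hcrit : ∀ k : Fin (m + 1), HasDerivAt (fun t : ℝ => L (Function.update θ k t)) 0 (θ k)) :
    ∀ j : Fin m,
      b' (θ 0) / a' (θ 0) + b' (θ j.succ) / a' (θ j.succ) = (∑ i : Fin n, (y i j : ℝ)) / n := by
  have hfd : ∀ (x : ℕ) (t : ℝ),
      HasDerivAt (fun s => f x s) (f x t * ((x : ℝ) * a' t - b' t)) t := by
    intro x t
    have h1 : HasDerivAt (fun s => (x : ℝ) * a s - b s) ((x : ℝ) * a' t - b' t) t :=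
      ((ha t).const_mul _).sub (hb t)
    have h2 := h1.exp.const_mul (h x)
    have heq : (fun s => h x * Real.exp ((x : ℝ) * a s - b s)) = fun s => f x s := by
      funext s; rw [hf]
    rw [heq] at h2
    have e : f x t * ((x : ℝ) * a' t - b' t)
        = h x * (Real.exp ((x : ℝ) * a t - b t) * ((x : ℝ) * a' t - b' t)) := by
      rw [hf]; ring
    rw [e]; exact h2
  intro j0
  set M : Fin n → ℕ := fun i => Finset.univ.inf' ⟨⟨0, hm⟩, Finset.mem_univ _⟩ (y i) with hM
  set term : Fin n → ℕ → ℝ :=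
    fun i u => f u (θ 0) * ∏ j : Fin m, f (y i j - u) (θ j.succ) with hterm
  set S : Fin n → ℝ := fun i => ∑ u ∈ Finset.range (M i + 1), term i u with hS
  set W : Fin n → ℝ := fun i => ∑ u ∈ Finset.range (M i + 1), (u : ℝ) * term i u with hW
  have hLθ : L θ = ∏ i, S i := hL θ
  have hPne : (∏ i, S i) ≠ 0 := by rw [← hLθ]; exact hLpos.ne'
  have hSne : ∀ i, S i ≠ 0 := by
    intro i hz
    exact hPne (Finset.prod_eq_zero (Finset.mem_univ i) hz)
  have hdiv : ∀ D : Fin n → ℝ,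
      (∑ i, (∏ i' ∈ Finset.univ.erase i, S i') * D i) = 0 → (∑ i, D i / S i) = 0 := by
    intro D hsum
    have heq : ∑ i, (∏ i' ∈ Finset.univ.erase i, S i') * D i
        = (∑ i, D i / S i) * ∏ i, S i := by
      rw [Finset.sum_mul]
      refine Finset.sum_congr rfl fun i _ => ?_
      rw [← Finset.mul_prod_erase _ _ (Finset.mem_univ i)]
      field_simp [hSne i]
    rw [heq] at hsum
    rcases mul_eq_zero.mp hsum with h1 | h1
    · exact h1
    · exact absurd h1 hPne
  -- coordinate 0
  have key0 : (fun t : ℝ => L (Function.update θ 0 t)) = fun t =>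
      ∏ i, ∑ u ∈ Finset.range (M i + 1), f u t * ∏ j : Fin m, f (y i j - u) (θ j.succ) := by
    funext t
    rw [hL]
    refine Finset.prod_congr rfl fun i _ => Finset.sum_congr rfl fun u _ => ?_
    rw [Function.update_self]
    refine congrArg _ (Finset.prod_congr rfl fun j _ => ?_)
    rw [Function.update_of_ne (Fin.succ_ne_zero j)]
  have hD0 : ∀ i : Fin n, HasDerivAt
      (fun t => ∑ u ∈ Finset.range (M i + 1), f u t * ∏ j : Fin m, f (y i j - u) (θ j.succ))
      (∑ u ∈ Finset.range (M i + 1), term i u * ((u : ℝ) * a' (θ 0) - b' (θ 0))) (θ 0) := by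
    intro i
    refine HasDerivAt.fun_sum fun u _ => ?_
    have := (hfd u (θ 0)).mul_const (∏ j : Fin m, f (y i j - u) (θ j.succ))
    convert this using 1
    · rfl
    simp only [hterm]
    ring
  have hprod0 : HasDerivAt (fun t =>
      ∏ i, ∑ u ∈ Finset.range (M i + 1), f u t * ∏ j : Fin m, f (y i j - u) (θ j.succ))
      (∑ i, (∏ i' ∈ Finset.univ.erase i, S i') •
        (∑ u ∈ Finset.range (M i + 1), term i u * ((u : ℝ) * a' (θ 0) - b' (θ 0)))) (θ 0) :=
    HasDerivAt.fun_finsetProd fun i _ => hD0 i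
  have hc0 := hcrit 0
  rw [key0] at hc0
  have eq0 : (∑ i, (∑ u ∈ Finset.range (M i + 1),
      term i u * ((u : ℝ) * a' (θ 0) - b' (θ 0))) / S i) = 0 := by
    apply hdiv
    have := hprod0.unique hc0
    simpa [smul_eq_mul] using this
  have hsplit0 : ∀ i, (∑ u ∈ Finset.range (M i + 1),
      term i u * ((u : ℝ) * a' (θ 0) - b' (θ 0))) = a' (θ 0) * W i - b' (θ 0) * S i := by
    intro i
    rw [hW, hS, Finset.mul_sum, Finset.mul_sum, ← Finset.sum_sub_distrib]
    exact Finset.sum_congr rfl fun u _ => by ring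
  set R : ℝ := ∑ i, W i / S i with hR
  have eq0' : (∑ i, (a' (θ 0) * (W i / S i) - b' (θ 0))) = 0 := by
    rw [← eq0]
    refine Finset.sum_congr rfl fun i _ => ?_
    rw [hsplit0 i]
    field_simp [hSne i]
  have e0 : a' (θ 0) * R = n * b' (θ 0) := by
    have h1 := eq0'
    rw [Finset.sum_sub_distrib, Finset.sum_const, Finset.card_univ, Fintype.card_fin,
      ← Finset.mul_sum, nsmul_eq_mul] at h1
    rw [← hR] at h1
    linarith
  -- coordinate j0.succ
  have keyj : (fun t : ℝ => L (Function.update θ j0.succ t)) = fun t =>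
      ∏ i, ∑ u ∈ Finset.range (M i + 1), f u (θ 0) *
        ((∏ j ∈ Finset.univ.erase j0, f (y i j - u) (θ j.succ)) * f (y i j0 - u) t) := by
    funext t
    rw [hL]
    refine Finset.prod_congr rfl fun i _ => Finset.sum_congr rfl fun u _ => ?_
    rw [Function.update_of_ne (Fin.succ_ne_zero j0).symm]
    congr 1
    rw [← Finset.mul_prod_erase _ _ (Finset.mem_univ j0), Function.update_self, mul_comm]
    congr 1
    exact Finset.prod_congr rfl fun j hj => by
      rw [Function.update_of_ne (fun hc => Finset.ne_of_mem_erase hj (Fin.succ_injective _ hc))]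
  have hDj : ∀ i : Fin n, HasDerivAt
      (fun t => ∑ u ∈ Finset.range (M i + 1), f u (θ 0) *
        ((∏ j ∈ Finset.univ.erase j0, f (y i j - u) (θ j.succ)) * f (y i j0 - u) t))
      (∑ u ∈ Finset.range (M i + 1),
        term i u * (((y i j0 : ℝ) - u) * a' (θ j0.succ) - b' (θ j0.succ))) (θ j0.succ) := by
    intro i
    refine HasDerivAt.fun_sum fun u hu => ?_
    have hule : u ≤ y i j0 := le_trans (Nat.lt_succ_iff.mp (Finset.mem_range.mp hu))
      (Finset.inf'_le _ (Finset.mem_univ j0))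
    have hd := ((hfd (y i j0 - u) (θ j0.succ)).const_mul
      (∏ j ∈ Finset.univ.erase j0, f (y i j - u) (θ j.succ))).const_mul (f u (θ 0))
    convert hd using 1
    · rfl
    have hcast : ((y i j0 - u : ℕ) : ℝ) = (y i j0 : ℝ) - u := by
      rw [Nat.cast_sub hule]
    rw [hcast]
    simp only [hterm]
    have hpe : (∏ j : Fin m, f (y i j - u) (θ j.succ))
        = f (y i j0 - u) (θ j0.succ) * ∏ j ∈ Finset.univ.erase j0, f (y i j - u) (θ j.succ) :=
      (Finset.mul_prod_erase _ _ (Finset.mem_univ j0)).symm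
    rw [hpe]
    ring
  have hprodj : HasDerivAt (fun t =>
      ∏ i, ∑ u ∈ Finset.range (M i + 1), f u (θ 0) *
        ((∏ j ∈ Finset.univ.erase j0, f (y i j - u) (θ j.succ)) * f (y i j0 - u) t))
      (∑ i, (∏ i' ∈ Finset.univ.erase i, S i') •
        (∑ u ∈ Finset.range (M i + 1),
          term i u * (((y i j0 : ℝ) - u) * a' (θ j0.succ) - b' (θ j0.succ)))) (θ j0.succ) := by
    have hSval : ∀ i, (∑ u ∈ Finset.range (M i + 1), f u (θ 0) *
        ((∏ j ∈ Finset.univ.erase j0, f (y i j - u) (θ j.succ)) * f (y i j0 - u) (θ j0.succ)))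
        = S i := by
      intro i
      refine Finset.sum_congr rfl fun u _ => ?_
      simp only [hterm]
      rw [← Finset.mul_prod_erase Finset.univ (fun j => f (y i j - u) (θ j.succ))
        (Finset.mem_univ j0)]
      ring
    have := HasDerivAt.fun_finsetProd (x := θ j0.succ) fun i (_ : i ∈ Finset.univ) => hDj i
    convert this using 1
    · rfl
    · rfl
    refine Finset.sum_congr rfl fun i _ => ?_
    congr 1
    exact Finset.prod_congr rfl fun i' _ => (hSval i').symm
  have hcj := hcrit j0.succ
  rw [keyj] at hcj
  have eqj : (∑ i, (∑ u ∈ Finset.range (M i + 1),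
      term i u * (((y i j0 : ℝ) - u) * a' (θ j0.succ) - b' (θ j0.succ))) / S i) = 0 := by
    apply hdiv
    have := hprodj.unique hcj
    simpa [smul_eq_mul] using this
  have hsplitj : ∀ i, (∑ u ∈ Finset.range (M i + 1),
      term i u * (((y i j0 : ℝ) - u) * a' (θ j0.succ) - b' (θ j0.succ)))
      = a' (θ j0.succ) * ((y i j0 : ℝ) * S i - W i) - b' (θ j0.succ) * S i := by
    intro i
    rw [show a' (θ j0.succ) * ((y i j0 : ℝ) * S i - W i) - b' (θ j0.succ) * S i
        = (y i j0 : ℝ) * a' (θ j0.succ) * S i - a' (θ j0.succ) * W i - b' (θ j0.succ) * S i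
        by ring,
      hS, hW, Finset.mul_sum, Finset.mul_sum, Finset.mul_sum, ← Finset.sum_sub_distrib,
      ← Finset.sum_sub_distrib]
    exact Finset.sum_congr rfl fun u _ => by ring
  set Y : ℝ := ∑ i, (y i j0 : ℝ) with hY
  have eqj' : (∑ i, (a' (θ j0.succ) * ((y i j0 : ℝ) - W i / S i) - b' (θ j0.succ))) = 0 := by
    rw [← eqj]
    refine Finset.sum_congr rfl fun i _ => ?_
    rw [hsplitj i]
    field_simp [hSne i]
  have ej : a' (θ j0.succ) * (Y - R) = n * b' (θ j0.succ) := by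
    have h1 := eqj'
    rw [Finset.sum_sub_distrib, ← Finset.mul_sum, Finset.sum_sub_distrib, ← hY, ← hR,
      Finset.sum_const, Finset.card_univ, Fintype.card_fin, nsmul_eq_mul] at h1
    linarith
  have hn' : (n : ℝ) ≠ 0 := Nat.cast_ne_zero.mpr hn.ne'
  have e1 : b' (θ 0) / a' (θ 0) = R / n := by
    rw [div_eq_div_iff (ha' _) hn']
    linarith
  have e2 : b' (θ j0.succ) / a' (θ j0.succ) = (Y - R) / n := by
    rw [div_eq_div_iff (ha' _) hn']
    linarith
  rw [e1, e2]
  ring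
end
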